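/- arXiv:1903.09695 — 9 statements merged into one kernel-verified Lean document; each statement's English description precedes it below -/
import Mathlib

section
/- Let (q,n) be a Dickson pair. Then the integers [1]_q, [2]_q, …, [n]_q form a complete set of distinct residues modulo n; that is, the map k ↦ [k]_q mod n is a bijection from {1,…,n} onto the residue classes modulo n. -/
/-- `(q, n)` is a Dickson pair: `q` is a prime power, every prime divisor of `n`
divides `q - 1`, and if `q ≡ 3 (mod 4)` then `4` does not divide `n`. -/
def IsDicksonPair (q n : ℕ) : Prop :=
  0 < q ∧ 0 < n ∧ (∃ p l : ℕ, Nat.Prime p ∧ 0 < l ∧ q = p ^ l) ∧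
    (∀ p : ℕ, Nat.Prime p → p ∣ n → p ∣ q - 1) ∧ (q % 4 = 3 → ¬ 4 ∣ n)

/-- `[k]_q = 1 + q + q^2 + ⋯ + q^(k-1)`. -/
def dq (q k : ℕ) : ℕ := ∑ i ∈ Finset.range k, q ^ i

lemma dq_succ (q k : ℕ) : dq q (k+1) = dq q k + q ^ k := Finset.sum_range_succ _ _

lemma geo (q : ℕ) (hq : 1 ≤ q) : ∀ k, (q - 1) * dq q k = q ^ k - 1 := by
  intro k
  induction k with
  | zero => simp [dq]
  | succ k ih =>
    rw [dq_succ, Nat.mul_add, ih]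
    have h1 : 1 ≤ q ^ k := Nat.one_le_pow _ _ hq
    have h2 : q ^ (k+1) = q * q ^ k := by ring
    have h3 : q ^ k ≤ q ^ (k+1) := Nat.pow_le_pow_right hq (by omega)
    have h4 : (q - 1) * q ^ k = q * q ^ k - q ^ k := by
      rw [Nat.sub_mul]; omega
    omega

lemma dq_pos (q k : ℕ) (hq : 1 ≤ q) (hk : k ≠ 0) : 0 < dq q k := by
  have : k ≤ dq q k := by
    calc k = ∑ i ∈ Finset.range k, 1 := by simp
    _ ≤ _ := Finset.sum_le_sum (fun i _ => Nat.one_le_pow _ _ hq)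
  omega

lemma dq_modEq (q k : ℕ) (hq : 1 ≤ q) : dq q k ≡ k [MOD q - 1] := by
  induction k with
  | zero => simp [dq]; rfl
  | succ k ih =>
    rw [dq_succ]
    have hq1 : q ≡ 1 [MOD q - 1] := (Nat.modEq_iff_dvd' hq).mpr dvd_rfl |>.symm
    have := hq1.pow (m := k)
    simpa using ih.add this

lemma dq_mono (q : ℕ) {a b : ℕ} (hab : a ≤ b) : dq q a ≤ dq q b :=
  Finset.sum_le_sum_of_subset (Finset.range_subset_range.mpr hab)

lemma dq_add (q a m : ℕ) : dq q (a + m) = dq q a + q ^ a * dq q m := by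
  induction m with
  | zero => simp [dq]
  | succ m ih =>
    rw [← Nat.add_assoc, dq_succ, ih, dq_succ, Nat.mul_add, pow_add]
    ring

lemma val_dq (q k p : ℕ) (hq : 2 ≤ q) (hk : k ≠ 0) (hp : p.Prime) (hpd : p ∣ q - 1)
    (hcase : Odd p ∨ q % 4 = 1) : padicValNat p (dq q k) = padicValNat p k := by
  haveI : Fact p.Prime := ⟨hp⟩
  have hq1 : 1 ≤ q := by omega
  have hpq : ¬ p ∣ q := by
    intro hd
    have : p ∣ 1 := by
      have : q - (q - 1) = 1 := by omega
      exact this ▸ Nat.dvd_sub hd hpd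
    exact hp.one_lt.ne' (Nat.dvd_one.mp this)
  have hdq0 : dq q k ≠ 0 := (dq_pos q k hq1 hk).ne'
  have hq10 : q - 1 ≠ 0 := by omega
  have key : padicValNat p (q ^ k - 1) = padicValNat p (q - 1) + padicValNat p k := by
    rcases hcase with hodd | hq4
    · have := padicValNat.pow_sub_pow (p := p) hodd (x := q) (y := 1)
        (by omega) (by simpa using hpd) hpq hk
      simpa using this
    · by_cases ho : Odd p
      · have := padicValNat.pow_sub_pow (p := p) ho (x := q) (y := 1)
          (by omega) (by simpa using hpd) hpq hk
        simpa using this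
      · have hp2 : p = 2 := (Nat.Prime.even_iff hp).mp (Nat.not_odd_iff_even.mp ho)
        subst hp2
        have h2q1 : 2 ∣ q - 1 := by omega
        rcases Nat.even_or_odd k with hke | hko
        · have hv2 : padicValNat 2 (q + 1) = 1 := by
            obtain ⟨m, hm, hmo⟩ : ∃ m, q + 1 = 2 * m ∧ m % 2 = 1 := ⟨(q+1)/2, by omega, by omega⟩
            rw [hm, padicValNat.mul (by norm_num) (by omega), padicValNat.self (by norm_num),
              padicValNat.eq_zero_of_not_dvd (by omega)]
          have := padicValNat.pow_two_sub_pow (x := q) (y := 1) (by omega)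
            (by simpa using h2q1) (by omega) hk hke
          simp only [one_pow] at this
          omega
        · have hdqodd : ¬ (2 ∣ dq q k) := by
            have hmod : dq q k ≡ k [MOD 2] := (dq_modEq q k hq1).of_dvd h2q1
            have : dq q k % 2 = k % 2 := hmod
            rcases hko with ⟨t, ht⟩
            omega
          have hmul2 : padicValNat 2 ((q - 1) * dq q k) =
              padicValNat 2 (q - 1) + padicValNat 2 (dq q k) := padicValNat.mul hq10 hdq0
          rw [geo q hq1 k, padicValNat.eq_zero_of_not_dvd hdqodd] at hmul2
          have hk2 : padicValNat 2 k = 0 :=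
            padicValNat.eq_zero_of_not_dvd (by rcases hko with ⟨t, ht⟩; omega)
          omega
  have hmul : padicValNat p ((q - 1) * dq q k) =
      padicValNat p (q - 1) + padicValNat p (dq q k) :=
    padicValNat.mul hq10 hdq0
  rw [geo q hq1 k, key] at hmul
  omega

lemma dickson_two_le (q n : ℕ) (h : IsDicksonPair q n) : 2 ≤ q := by
  obtain ⟨-, -, ⟨p, l, hp, hl, rfl⟩, -, -⟩ := h
  calc 2 ≤ p := hp.two_le
  _ = p ^ 1 := (pow_one p).symm
  _ ≤ p ^ l := Nat.pow_le_pow_right hp.pos hl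

lemma dq_dvd_iff (q n : ℕ) (h : IsDicksonPair q n) (k : ℕ) (hk : k ≠ 0) :
    n ∣ dq q k ↔ n ∣ k := by
  have hq : 2 ≤ q := dickson_two_le q n h
  obtain ⟨-, hn, -, hdvd, h4⟩ := h
  have hq1 : 1 ≤ q := by omega
  have hdq0 : dq q k ≠ 0 := (dq_pos q k hq1 hk).ne'
  rw [← Nat.factorization_le_iff_dvd hn.ne' hdq0, ← Nat.factorization_le_iff_dvd hn.ne' hk,
    Finsupp.le_def, Finsupp.le_def]
  have main : ∀ p : ℕ, n.factorization p ≤ (dq q k).factorization p ↔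
      n.factorization p ≤ k.factorization p := by
    intro p
    by_cases hp0 : n.factorization p = 0
    · simp [hp0]
    have hpmem : p ∈ n.primeFactors := by
      rw [← Nat.support_factorization]; exact Finsupp.mem_support_iff.mpr hp0
    obtain ⟨hp, hpn, -⟩ := Nat.mem_primeFactors.mp hpmem
    have hpq1 : p ∣ q - 1 := hdvd p hp hpn
    by_cases hc : Odd p ∨ q % 4 = 1
    · rw [Nat.factorization_def (dq q k) hp, Nat.factorization_def k hp,
        val_dq q k p hq hk hp hpq1 hc]
    · push_neg at hc
      obtain ⟨hnotodd, hq4⟩ := hc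
      have hp2 : p = 2 := (Nat.Prime.even_iff hp).mp (Nat.not_odd_iff_even.mp hnotodd)
      subst hp2
      have hqodd : q % 2 = 1 := by omega
      have hq3 : q % 4 = 3 := by omega
      have hn4 : ¬ 4 ∣ n := h4 hq3
      have hfle : n.factorization 2 ≤ 1 := by
        by_contra hgt
        exact hn4 (by
          have : (2:ℕ) ^ 2 ∣ n := (Nat.Prime.pow_dvd_iff_le_factorization Nat.prime_two
            hn.ne').mpr (by omega)
          simpa using this)
      have hf1 : n.factorization 2 = 1 := by omega
      have hmod : dq q k % 2 = k % 2 := (dq_modEq q k hq1).of_dvd (by omega)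
      rw [hf1, ← Nat.Prime.dvd_iff_one_le_factorization Nat.prime_two hdq0,
        ← Nat.Prime.dvd_iff_one_le_factorization Nat.prime_two hk]
      omega
  constructor
  · intro hle p; exact (main p).mp (hle p)
  · intro hle p; exact (main p).mpr (hle p)

/-- For a Dickson pair `(q,n)`, the map `k ↦ [k]_q mod n` is a bijection from
`{1, …, n}` onto the residue classes modulo `n`. -/
theorem dickson_bracket_bijOn_residues (q n : ℕ) (h : IsDicksonPair q n) :
    Set.BijOn (fun k : ℕ => (dq q k : ZMod n)) (Set.Icc 1 n) Set.univ := by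
  have hq : 2 ≤ q := dickson_two_le q n h
  have hn : 0 < n := h.2.1
  haveI : NeZero n := ⟨hn.ne'⟩
  have hcop : Nat.Coprime n q := by
    by_contra hc
    obtain ⟨p, hp, hpn, hpq⟩ := Nat.Prime.not_coprime_iff_dvd.mp hc
    have h1 := h.2.2.2.1 p hp hpn
    have hpd : p ∣ 1 := by
      have he : q - (q - 1) = 1 := by omega
      exact he ▸ Nat.dvd_sub hpq h1
    exact hp.one_lt.ne' (Nat.dvd_one.mp hpd)
  have hinj : Set.InjOn (fun k : ℕ => (dq q k : ZMod n)) (Set.Icc 1 n) := by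
    have key : ∀ a b, a ∈ Set.Icc 1 n → b ∈ Set.Icc 1 n → a ≤ b →
        (dq q a : ZMod n) = dq q b → a = b := by
      intro a b ha hb hab heq
      have hmod : dq q a ≡ dq q b [MOD n] := (ZMod.natCast_eq_natCast_iff _ _ _).mp heq
      have hdvd : n ∣ dq q b - dq q a := (Nat.modEq_iff_dvd' (dq_mono q hab)).mp hmod
      have hsub : dq q b - dq q a = q ^ a * dq q (b - a) := by
        have hadd := dq_add q a (b - a)
        rw [Nat.add_sub_cancel' hab] at hadd
        omega
      rw [hsub] at hdvd
      have hdvd2 : n ∣ dq q (b - a) := (hcop.pow_right a).dvd_of_dvd_mul_left hdvd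
      by_contra hne
      have hba : b - a ≠ 0 := by omega
      have hd := (dq_dvd_iff q n h (b - a) hba).mp hdvd2
      have := Nat.le_of_dvd (by omega) hd
      simp only [Set.mem_Icc] at ha hb
      omega
    intro a ha b hb heq
    rcases le_total a b with hab | hab
    · exact key a b ha hb hab heq
    · exact (key b a hb ha hab heq.symm).symm
  refine ⟨fun x _ => Set.mem_univ _, hinj, ?_⟩
  classical
  have himg : (Finset.Icc 1 n).image (fun k : ℕ => (dq q k : ZMod n)) = Finset.univ := by
    apply Finset.eq_univ_of_card
    rw [Finset.card_image_of_injOn (by rw [Finset.coe_Icc]; exact hinj), Nat.card_Icc,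
      ZMod.card n]
    omega
  intro y _
  have hy : y ∈ (Finset.Icc 1 n).image (fun k : ℕ => (dq q k : ZMod n)) := by
    rw [himg]; exact Finset.mem_univ y
  obtain ⟨x, hx, hxy⟩ := Finset.mem_image.mp hy
  exact ⟨x, by simpa using hx, hxy⟩
end

section
/- Let (q,n) be a Dickson pair. Then n divides [n]_q = 1 + q + q^2 + ⋯ + q^{n−1}. -/
lemma dq_mul (q a b : ℕ) : dq q (a * b) = dq q a * dq (q ^ a) b := by
  induction b with
  | zero => simp [dq]
  | succ b ih =>
      have expand : dq (q ^ a) (b + 1) = dq (q ^ a) b + (q ^ a) ^ b := by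
        simp [dq, Finset.sum_range_succ]
      rw [Nat.mul_succ, dq, Finset.sum_range_add, ← dq, ih, expand]
      have : ∀ i, q ^ (a * b + i) = (q ^ a) ^ b * q ^ i := by
        intro i; rw [pow_add, ← pow_mul]
      simp only [this, ← Finset.mul_sum]
      rw [show (∑ i ∈ Finset.range a, q ^ i) = dq q a from rfl]
      ring

lemma prime_dvd_dq (p q : ℕ) (hp : p.Prime) (hq : 0 < q) (hd : p ∣ q - 1) : p ∣ dq q p := by
  have h1 : (q : ZMod p) = 1 := by
    have : ((q - 1 : ℕ) : ZMod p) = 0 := (ZMod.natCast_eq_zero_iff _ _).2 hd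
    have hc : ((q - 1 : ℕ) : ZMod p) = (q : ZMod p) - 1 := by
      push_cast [Nat.cast_sub hq]; ring
    rw [hc] at this
    linear_combination this
  have : ((dq q p : ℕ) : ZMod p) = 0 := by
    simp [dq, h1]
  exact (ZMod.natCast_eq_zero_iff _ _).1 this

lemma key (n : ℕ) : ∀ q : ℕ, 0 < q → (∀ p : ℕ, Nat.Prime p → p ∣ n → p ∣ q - 1) →
    n ∣ dq q n := by
  induction n using Nat.strong_induction_on with
  | _ n ih =>
    intro q hq hdvd
    rcases Nat.lt_or_ge n 2 with hn | hn
    · interval_cases n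
      · simp [dq]
      · simp [dq]
    · set p := n.minFac with hp
      have hpp : p.Prime := Nat.minFac_prime (by omega)
      have hpn : p ∣ n := Nat.minFac_dvd n
      obtain ⟨m, hm⟩ := hpn
      have hmpos : 0 < m := by
        rcases Nat.eq_zero_or_pos m with h | h
        · subst h; simp at hm; omega
        · exact h
      have hm1 : m < n := by
        have h2 := hpp.two_le
        nlinarith
      have h1 : p ∣ dq q p := prime_dvd_dq p q hpp hq (hdvd p hpp ⟨m, hm⟩)
      have h2 : m ∣ dq (q ^ p) m := by
        apply ih m hm1 (q ^ p) (pow_pos hq p)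
        intro r hr hrm
        have hrq : r ∣ q - 1 := hdvd r hr (hm ▸ Dvd.dvd.mul_left hrm p)
        exact hrq.trans (by simpa using Nat.sub_dvd_pow_sub_pow q 1 p)
      rw [hm, dq_mul]
      exact mul_dvd_mul h1 h2

/-- If `(q,n)` is a Dickson pair, then `n` divides `[n]_q = 1 + q + ⋯ + q^(n-1)`. -/
theorem dickson_n_dvd_bracket_n (q n : ℕ) (h : IsDicksonPair q n) :
    n ∣ dq q n := by
  exact key n q h.1 h.2.2.2.1
end

section
/- Let (q,2) be a Dickson pair with q = p^l and consider the Dickson nearfield setup with n = 2. Let α, β ∈ F be such that α, β, and α+β are all nonzero and do not all lie in the same coset of H in F* (the two cosets being H and gH). Then for every λ ∈ F: (α+β) ∘ λ = α ∘ λ + β ∘ λ if and only if λ^q = λ. -/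
/-- `x` lies in the coset `g^([k]_q) • H` where `H = ⟨g^n⟩`. -/
def inCoset {F : Type*} [Field F] (g : F) (q n k : ℕ) (x : F) : Prop :=
  ∃ j : ℕ, x = g ^ dq q k * (g ^ n) ^ j

/-- Dickson nearfield setup with `n = 2`: if `α`, `β`, `α+β` are nonzero and do not
all lie in the same `H`-coset, then `λ` distributes over `(α, β)` iff `λ^q = λ`. -/
theorem distributive_iff_fixed_of_not_same_coset_n_two {F : Type*} [Field F] [Fintype F]
    (q : ℕ) (hqn : IsDicksonPair q 2)
    (hcard : Fintype.card F = q ^ 2)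
    (g : F) (hg : ∀ x : F, x ≠ 0 → ∃ j : ℕ, x = g ^ j)
    (circ : F → F → F)
    (hcirc0 : ∀ lam : F, circ 0 lam = 0)
    (hcirc : ∀ k : ℕ, 1 ≤ k → k ≤ 2 → ∀ x : F, inCoset g q 2 k x →
      ∀ lam : F, circ x lam = x * lam ^ q ^ k)
    (α β : F) (hα : α ≠ 0) (hβ : β ≠ 0) (hαβ : α + β ≠ 0)
    (hnot : ¬ ∃ k : ℕ, 1 ≤ k ∧ k ≤ 2 ∧ inCoset g q 2 k α ∧ inCoset g q 2 k β ∧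
      inCoset g q 2 k (α + β)) :
    ∀ lam : F, circ (α + β) lam = circ α lam + circ β lam ↔ lam ^ q = lam := by
  classical
  obtain ⟨hq0, -, ⟨p, l, hp, hl, hql⟩, hdvd, -⟩ := hqn
  have h2 : 2 ∣ q - 1 := hdvd 2 Nat.prime_two ⟨1, rfl⟩
  have hq2 : 2 ≤ q := by
    have h1 : 1 < p ^ l := Nat.one_lt_pow hl.ne' hp.one_lt
    omega
  have hq4 : 4 ≤ q ^ 2 := by
    have := Nat.mul_le_mul hq2 hq2
    rw [pow_two]; omega
  obtain ⟨t, ht⟩ : ∃ t, q = 2 * t + 1 := ⟨(q - 1) / 2, by omega⟩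
  have hg0 : g ≠ 0 := by
    intro h
    have hall : ∀ x : F, x = 0 ∨ x = 1 := by
      intro x
      by_cases hx : x = 0
      · exact Or.inl hx
      · obtain ⟨j, hj⟩ := hg x hx
        rcases Nat.eq_zero_or_pos j with hj0 | hj0
        · right; rw [hj, hj0, pow_zero]
        · exfalso; apply hx; rw [hj, h, zero_pow (by omega)]
    have hle : Fintype.card F ≤ 2 := by
      have hsub : (Finset.univ : Finset F) ⊆ {0, 1} := by
        intro x _
        rcases hall x with h | h <;> simp [h]
      calc Fintype.card F = (Finset.univ : Finset F).card := rfl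
      _ ≤ ({0, 1} : Finset F).card := Finset.card_le_card hsub
      _ ≤ 2 := Finset.card_insert_le _ _ |>.trans (by simp)
    omega
  have hgpow : g ^ (q ^ 2 - 1) = 1 := by
    have := FiniteField.pow_card_sub_one_eq_one g hg0
    rwa [hcard] at this
  have hlam2 : ∀ lam : F, lam ^ q ^ 2 = lam := by
    intro lam
    have := FiniteField.pow_card lam
    rwa [hcard] at this
  have hdq1 : dq q 1 = 1 := by simp [dq]
  have hdq2 : dq q 2 = 1 + q := by
    simp [dq, Finset.sum_range_succ]
  have hcov : ∀ x : F, x ≠ 0 → inCoset g q 2 1 x ∨ inCoset g q 2 2 x := by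
    intro x hx
    obtain ⟨j, hj⟩ := hg x hx
    rcases Nat.even_or_odd j with ⟨m, hm⟩ | ⟨m, hm⟩
    · right
      obtain ⟨c, hc⟩ : ∃ c, q ^ 2 = c + 2 := ⟨q ^ 2 - 2, by omega⟩
      refine ⟨m + (t + 1) * c, ?_⟩
      rw [hdq2, ← pow_mul, ← pow_add]
      have hexp : 1 + q + 2 * (m + (t + 1) * c) = (m + m) + (q ^ 2 - 1) * (1 + q) := by
        have h1 : q ^ 2 - 1 = c + 1 := by omega
        rw [h1, ht]; ring
      rw [hexp, pow_add, pow_mul, hgpow, one_pow, mul_one, hj, hm]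
    · left
      refine ⟨m, ?_⟩
      rw [hdq1, ← pow_mul, ← pow_add, hj, hm]
      congr 1
      omega
  have e1 : ∀ x : F, inCoset g q 2 1 x → ∀ lam : F, circ x lam = x * lam ^ q := by
    intro x hx lam
    have := hcirc 1 le_rfl one_le_two x hx lam
    rwa [pow_one] at this
  have e2 : ∀ x : F, inCoset g q 2 2 x → ∀ lam : F, circ x lam = x * lam := by
    intro x hx lam
    have := hcirc 2 one_le_two le_rfl x hx lam
    rwa [hlam2] at this
  intro lam
  rcases hcov α hα with hA | hA <;> rcases hcov β hβ with hB | hB <;>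
    rcases hcov (α + β) hαβ with hC | hC
  · exact absurd ⟨1, le_rfl, one_le_two, hA, hB, hC⟩ hnot
  · rw [e2 _ hC, e1 _ hA, e1 _ hB]
    constructor
    · intro h
      have key : (α + β) * lam ^ q = (α + β) * lam := by linear_combination -h
      exact mul_left_cancel₀ hαβ key
    · intro h; rw [h]; ring
  · rw [e1 _ hC, e1 _ hA, e2 _ hB]
    constructor
    · intro h
      have key : β * lam ^ q = β * lam := by linear_combination h
      exact mul_left_cancel₀ hβ key
    · intro h; rw [h]; ring
  · rw [e2 _ hC, e1 _ hA, e2 _ hB]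
    constructor
    · intro h
      have key : α * lam ^ q = α * lam := by linear_combination -h
      exact mul_left_cancel₀ hα key
    · intro h; rw [h]; ring
  · rw [e1 _ hC, e2 _ hA, e1 _ hB]
    constructor
    · intro h
      have key : α * lam ^ q = α * lam := by linear_combination h
      exact mul_left_cancel₀ hα key
    · intro h; rw [h]; ring
  · rw [e2 _ hC, e2 _ hA, e1 _ hB]
    constructor
    · intro h
      have key : β * lam ^ q = β * lam := by linear_combination -h
      exact mul_left_cancel₀ hβ key
    · intro h; rw [h]; ring
  · rw [e1 _ hC, e2 _ hA, e2 _ hB]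
    constructor
    · intro h
      have key : (α + β) * lam ^ q = (α + β) * lam := by linear_combination h
      exact mul_left_cancel₀ hαβ key
    · intro h; rw [h]; ring
  · exact absurd ⟨2, one_le_two, le_rfl, hA, hB, hC⟩ hnot
end

section
/- Let (q,2) be a Dickson pair and consider the Dickson nearfield setup with n = 2. For all α, β ∈ F such that α, β, α+β are all nonzero, and for all λ ∈ F: (α+β) ∘ λ = α ∘ λ + β ∘ λ if and only if either α, β, α+β all lie in the same coset of H in F*, or λ^q = λ. -/
/-- Dickson nearfield setup with `n = 2`: for nonzero `α`, `β`, `α+β` and any `λ`,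
distributivity `(α+β) ∘ λ = α ∘ λ + β ∘ λ` holds iff either `α`, `β`, `α+β` all lie
in the same `H`-coset or `λ^q = λ`. -/
theorem distributive_iff_same_coset_or_fixed_n_two {F : Type*} [Field F] [Fintype F]
    (q : ℕ) (hqn : IsDicksonPair q 2)
    (hcard : Fintype.card F = q ^ 2)
    (g : F) (hg : ∀ x : F, x ≠ 0 → ∃ j : ℕ, x = g ^ j)
    (circ : F → F → F)
    (hcirc0 : ∀ lam : F, circ 0 lam = 0)
    (hcirc : ∀ k : ℕ, 1 ≤ k → k ≤ 2 → ∀ x : F, inCoset g q 2 k x →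
      ∀ lam : F, circ x lam = x * lam ^ q ^ k) :
    ∀ α β : F, α ≠ 0 → β ≠ 0 → α + β ≠ 0 →
      ∀ lam : F, circ (α + β) lam = circ α lam + circ β lam ↔
        ((∃ k : ℕ, 1 ≤ k ∧ k ≤ 2 ∧ inCoset g q 2 k α ∧ inCoset g q 2 k β ∧
          inCoset g q 2 k (α + β)) ∨ lam ^ q = lam) := by
  obtain ⟨hq0, -, ⟨p, l, hp, hl, hql⟩, hdvd, -⟩ := hqn
  have hq2 : 2 ≤ q := by
    subst hql
    calc 2 ≤ p := hp.two_le
    _ ≤ p ^ l := Nat.le_self_pow hl.ne' p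
  have h2q : 2 ∣ q - 1 := hdvd 2 Nat.prime_two ⟨1, rfl⟩
  have hq3 : 3 ≤ q := by omega
  have hqodd : q % 2 = 1 := by omega
  have hq2sq : q + 2 ≤ q ^ 2 := by nlinarith
  have hq2odd : q ^ 2 % 2 = 1 := by rw [Nat.pow_mod, hqodd]
  classical
  have hgne : g ≠ 0 := by
    rintro rfl
    have hsub : (Finset.univ : Finset F) ⊆ {0, 1} := by
      intro x _
      by_cases hx : x = 0
      · simp [hx]
      · obtain ⟨j, hj⟩ := hg x hx
        rcases Nat.eq_zero_or_pos j with h0 | h0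
        · subst h0; simp at hj; simp [hj]
        · rw [zero_pow h0.ne'] at hj; exact absurd hj hx
    have h1 := Finset.card_le_card hsub
    have h2 : ({0, 1} : Finset F).card ≤ 2 := Finset.card_insert_le _ _ |>.trans (by simp)
    rw [Finset.card_univ, hcard] at h1
    omega
  have hone : g ^ (q ^ 2 - 1) = 1 := by
    have := FiniteField.pow_card_sub_one_eq_one g hgne
    rwa [hcard] at this
  have hdq1 : dq q 1 = 1 := by simp [dq]
  have hdq2 : dq q 2 = 1 + q := by
    simp [dq, Finset.sum_range_succ]
  have key : ∀ x : F, x ≠ 0 → inCoset g q 2 1 x ∨ inCoset g q 2 2 x := by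
    intro x hx
    obtain ⟨m, rfl⟩ := hg x hx
    have hper : g ^ m = g ^ (m + (q ^ 2 - 1)) := by rw [pow_add, hone, mul_one]
    rcases Nat.even_or_odd m with hm | hm
    · right
      refine ⟨(m + (q ^ 2 - 1) - (1 + q)) / 2, ?_⟩
      rw [hdq2, ← pow_mul, ← pow_add, hper]
      congr 1
      obtain ⟨c, hc⟩ := hm
      omega
    · left
      refine ⟨(m + (q ^ 2 - 1) - 1) / 2, ?_⟩
      rw [hdq1, ← pow_mul, ← pow_add, hper]
      congr 1
      obtain ⟨c, hc⟩ := hm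
      omega
  intro α β hα hβ hαβ lam
  have hl2 : ∀ x : F, x ^ q ^ 2 = x := fun x => by rw [← hcard]; exact FiniteField.pow_card x
  have hc1 : ∀ x : F, inCoset g q 2 1 x → circ x lam = x * lam ^ q := fun x hx => by
    simpa using hcirc 1 le_rfl one_le_two x hx lam
  have hc2 : ∀ x : F, inCoset g q 2 2 x → circ x lam = x * lam := fun x hx => by
    rw [hcirc 2 one_le_two le_rfl x hx lam, hl2 lam]
  constructor
  · intro h
    rcases key α hα with hA | hA <;> rcases key β hβ with hB | hB <;>
      rcases key (α + β) hαβ with hC | hC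
    · exact Or.inl ⟨1, le_rfl, one_le_two, hA, hB, hC⟩
    · rw [hc2 _ hC, hc1 _ hA, hc1 _ hB] at h
      exact Or.inr (mul_left_cancel₀ hαβ (show (α + β) * lam ^ q = (α + β) * lam by
        linear_combination -h))
    · rw [hc1 _ hC, hc1 _ hA, hc2 _ hB] at h
      exact Or.inr (mul_left_cancel₀ hβ (show β * lam ^ q = β * lam by linear_combination h))
    · rw [hc2 _ hC, hc1 _ hA, hc2 _ hB] at h
      exact Or.inr (mul_left_cancel₀ hα (show α * lam ^ q = α * lam by linear_combination -h))
    · rw [hc1 _ hC, hc2 _ hA, hc1 _ hB] at h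
      exact Or.inr (mul_left_cancel₀ hα (show α * lam ^ q = α * lam by linear_combination h))
    · rw [hc2 _ hC, hc2 _ hA, hc1 _ hB] at h
      exact Or.inr (mul_left_cancel₀ hβ (show β * lam ^ q = β * lam by linear_combination -h))
    · rw [hc1 _ hC, hc2 _ hA, hc2 _ hB] at h
      exact Or.inr (mul_left_cancel₀ hαβ (show (α + β) * lam ^ q = (α + β) * lam by
        linear_combination h))
    · exact Or.inl ⟨2, one_le_two, le_rfl, hA, hB, hC⟩
  · rintro (⟨k, hk1, hk2, h1, h2, h3⟩ | hl)
    · interval_cases k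
      · rw [hc1 _ h3, hc1 _ h1, hc1 _ h2]; ring
      · rw [hc2 _ h3, hc2 _ h1, hc2 _ h2]; ring
    · have hcc : ∀ x : F, x ≠ 0 → circ x lam = x * lam := fun x hx =>
        (key x hx).elim (fun h => by rw [hc1 x h, hl]) (fun h => hc2 x h)
      rw [hcc _ hαβ, hcc _ hα, hcc _ hβ]; ring
end

section
/- Let (q,2) be a Dickson pair and consider the Dickson nearfield setup with n = 2. Then for every pair (α, β) ∈ F × F, the set D(α,β) either equals all of F or equals the subfield {λ ∈ F : λ^q = λ} of order q; in particular D(α,β) is the underlying set of a subfield of F. -/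
open Polynomial in
lemma card_pow_eq_mul_le {F : Type*} [Field F] [Fintype F] (q : ℕ) (hq : 1 < q) (c : F) :
    {x : F | x ^ q = c * x}.ncard ≤ q := by
  classical
  have hdeg : (X ^ q - C c * X : F[X]).natDegree = q := by
    have h1 : (C c * X : F[X]).natDegree < (X ^ q : F[X]).natDegree := by
      rw [natDegree_X_pow]
      exact lt_of_le_of_lt (natDegree_C_mul_le c X) (by rw [natDegree_X]; exact hq)
    rw [natDegree_sub_eq_left_of_natDegree_lt h1, natDegree_X_pow]
  have hne : (X ^ q - C c * X : F[X]) ≠ 0 := fun h => by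
    rw [h, natDegree_zero] at hdeg; omega
  have hsub : {x : F | x ^ q = c * x} ⊆ ((X ^ q - C c * X : F[X]).roots.toFinset : Set F) := by
    intro x hx
    simp only [Set.mem_setOf_eq] at hx
    simp only [Finset.coe_sort_coe, Multiset.mem_toFinset, Finset.mem_coe, mem_roots hne,
      IsRoot.def, eval_sub, eval_pow, eval_X, eval_mul, eval_C]
    rw [hx, sub_self]
  calc {x : F | x ^ q = c * x}.ncard
      ≤ ((X ^ q - C c * X : F[X]).roots.toFinset : Set F).ncard :=
        Set.ncard_le_ncard hsub (Set.toFinite _)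
    _ = (X ^ q - C c * X : F[X]).roots.toFinset.card := Set.ncard_coe_finset _
    _ ≤ Multiset.card (X ^ q - C c * X : F[X]).roots := Multiset.toFinset_card_le _
    _ ≤ (X ^ q - C c * X : F[X]).natDegree := card_roots' _
    _ = q := hdeg

lemma ncard_fixed_of_card_sq {F : Type*} [Field F] [Fintype F] (p l : ℕ) [Fact p.Prime]
    [CharP F p] (hl : 0 < l) (hcard : Fintype.card F = (p ^ l) ^ 2) :
    {x : F | x ^ p ^ l = x}.ncard = p ^ l := by
  classical
  set q := p ^ l with hq
  have hq1 : 1 < q := Nat.one_lt_pow hl.ne' (Fact.out : p.Prime).one_lt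
  have hpow : ∀ x : F, x ^ (q * q) = x := fun x => by
    have := FiniteField.pow_card x
    rwa [hcard, pow_two] at this
  let ψ : F →+ F :=
    { toFun := fun x => x ^ q - x
      map_zero' := by simp [zero_pow (by omega : q ≠ 0)]
      map_add' := fun x y => by
        show (x + y) ^ q - (x + y) = (x ^ q - x) + (y ^ q - y)
        rw [hq, add_pow_char_pow]; ring }
  have hker : (ψ.ker : Set F) = {x : F | x ^ q = x} := by
    ext x
    simp [ψ, AddMonoidHom.mem_ker, sub_eq_zero]
  have hcardker : Nat.card ψ.ker = ((ψ.ker : Set F)).ncard := by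
    rw [← SetLike.coe_sort_coe, Nat.card_coe_set_eq]
  have hkerle : Nat.card ψ.ker ≤ q := by
    rw [hcardker, hker]
    have := card_pow_eq_mul_le (F := F) q hq1 1
    simpa using this
  have hrangele : Nat.card ψ.range ≤ q := by
    have hsub : (ψ.range : Set F) ⊆ {y : F | y ^ q = (-1) * y} := by
      rintro y ⟨x, rfl⟩
      simp only [Set.mem_setOf_eq, ψ, AddMonoidHom.coe_mk, ZeroHom.coe_mk]
      rw [sub_pow_char_pow, ← pow_mul, hpow]
      ring
    calc Nat.card ψ.range = ((ψ.range : Set F)).ncard := by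
          rw [← SetLike.coe_sort_coe, Nat.card_coe_set_eq]
      _ ≤ {y : F | y ^ q = (-1) * y}.ncard := Set.ncard_le_ncard hsub (Set.toFinite _)
      _ ≤ q := card_pow_eq_mul_le (F := F) q hq1 (-1)
  have htot : q * q = Nat.card ψ.range * Nat.card ψ.ker := by
    have h1 := AddSubgroup.card_eq_card_quotient_mul_card_addSubgroup ψ.ker
    have h2 : Nat.card (F ⧸ ψ.ker) = Nat.card ψ.range :=
      Nat.card_congr (QuotientAddGroup.quotientKerEquivRange ψ).toEquiv
    rw [h2] at h1
    rw [← h1, Nat.card_eq_fintype_card, hcard, pow_two]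
  have hgeq : q ≤ Nat.card ψ.ker := by
    by_contra h
    push_neg at h
    have : Nat.card ψ.range * Nat.card ψ.ker < q * q :=
      Nat.mul_lt_mul_of_le_of_lt hrangele h (by omega)
    omega
  have : Nat.card ψ.ker = q := le_antisymm hkerle hgeq
  rw [← hker, ← hcardker, this]


/-- Dickson nearfield setup with `n = 2`: for every pair `(α, β)`, the generalized
distributive set `D(α,β)` equals all of `F` or the subfield `{λ : λ^q = λ}` of
order `q`; in particular it is the underlying set of a subfield of `F`. -/
theorem distributiveSet_eq_univ_or_baseField_n_two {F : Type*} [Field F] [Fintype F]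
    (q : ℕ) (hqn : IsDicksonPair q 2)
    (hcard : Fintype.card F = q ^ 2)
    (g : F) (hg : ∀ x : F, x ≠ 0 → ∃ j : ℕ, x = g ^ j)
    (circ : F → F → F)
    (hcirc0 : ∀ lam : F, circ 0 lam = 0)
    (hcirc : ∀ k : ℕ, 1 ≤ k → k ≤ 2 → ∀ x : F, inCoset g q 2 k x →
      ∀ lam : F, circ x lam = x * lam ^ q ^ k) :
    ∀ α β : F,
      ({lam : F | circ (α + β) lam = circ α lam + circ β lam} = Set.univ ∨
        ({lam : F | circ (α + β) lam = circ α lam + circ β lam} =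
          {lam : F | lam ^ q = lam} ∧ {lam : F | lam ^ q = lam}.ncard = q)) ∧
      ∃ K : Subfield F,
        (K : Set F) = {lam : F | circ (α + β) lam = circ α lam + circ β lam} := by
  classical
  obtain ⟨hq0, -, ⟨p, l, hp, hl, hqpl⟩, hdvd, -⟩ := hqn
  haveI hfp : Fact p.Prime := ⟨hp⟩
  have h2 : 2 ∣ q - 1 := hdvd 2 Nat.prime_two dvd_rfl
  have hq2 : 2 ≤ q := by
    rw [hqpl]; calc 2 ≤ p := hp.two_le
      _ ≤ p ^ l := Nat.le_self_pow hl.ne' p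
  obtain ⟨t, ht⟩ := h2
  have hq1 : q = 2 * t + 1 := by omega
  -- q is at least 3
  have hq3 : 3 ≤ q := by omega
  -- g is nonzero
  have hgne : g ≠ 0 := by
    intro hg0
    have hall : ∀ x : F, x = 0 ∨ x = 1 := by
      intro x
      by_cases hx : x = 0
      · exact Or.inl hx
      · obtain ⟨j, hj⟩ := hg x hx
        cases j with
        | zero => exact Or.inr (by simpa using hj)
        | succ n =>
          exfalso
          rw [hg0, zero_pow (Nat.succ_ne_zero n)] at hj
          exact hx hj
    have hsub : (Finset.univ : Finset F) ⊆ {0, 1} := by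
      intro x _
      rcases hall x with h | h <;> simp [h]
    have hle : Fintype.card F ≤ 2 := by
      calc Fintype.card F = (Finset.univ : Finset F).card := rfl
        _ ≤ ({0, 1} : Finset F).card := Finset.card_le_card hsub
        _ ≤ 2 := (Finset.card_insert_le _ _).trans (by simp)
    rw [hcard] at hle
    nlinarith
  have horder : g ^ (q ^ 2 - 1) = 1 := by
    have := FiniteField.pow_card_sub_one_eq_one g hgne
    rwa [hcard] at this
  have hpow2 : ∀ x : F, x ^ q ^ 2 = x := fun x => by
    have := FiniteField.pow_card x
    rwa [hcard] at this
  have hdq1 : dq q 1 = 1 := by simp [dq]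
  have hdq2 : dq q 2 = 1 + q := by
    rw [dq, Finset.sum_range_succ, Finset.sum_range_one, pow_zero, pow_one]
  have hOddq : Odd q := ⟨t, by omega⟩
  have hOdd2 : Odd (q ^ 2) := hOddq.pow
  obtain ⟨s, hs2⟩ := hOdd2
  have hq2q : q ^ 2 = q * q := sq q
  have hst : t + 1 ≤ s := by nlinarith
  -- the circ formulas
  have hoddc : ∀ x : F, (∃ j : ℕ, x = g ^ (2 * j + 1)) → ∀ lam : F,
      circ x lam = x * lam ^ q := by
    rintro x ⟨j, rfl⟩ lam
    have hco : inCoset g q 2 1 (g ^ (2 * j + 1)) := by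
      refine ⟨j, ?_⟩
      rw [hdq1, pow_one, ← pow_mul]
      ring
    have := hcirc 1 le_rfl (by norm_num) _ hco lam
    rwa [pow_one] at this
  have hevenc : ∀ x : F, (∃ j : ℕ, x = g ^ (2 * j)) → ∀ lam : F,
      circ x lam = x * lam := by
    rintro x ⟨j, rfl⟩ lam
    have hco : inCoset g q 2 2 (g ^ (2 * j)) := by
      refine ⟨j + (s - (t + 1)), ?_⟩
      rw [hdq2, ← pow_mul, ← pow_add]
      have hexp : 1 + q + 2 * (j + (s - (t + 1))) = 2 * j + (q ^ 2 - 1) := by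
        rw [hs2]; omega
      rw [hexp, pow_add, horder, mul_one]
    have := hcirc 2 (by norm_num) le_rfl _ hco lam
    rwa [hpow2] at this
  -- classification of nonzero elements
  have hclass : ∀ x : F, x ≠ 0 →
      (∃ j : ℕ, x = g ^ (2 * j)) ∨ (∃ j : ℕ, x = g ^ (2 * j + 1)) := by
    intro x hx
    obtain ⟨j, hj⟩ := hg x hx
    rcases Nat.even_or_odd j with ⟨c, hc⟩ | ⟨c, hc⟩
    · exact Or.inl ⟨c, by rw [hj]; congr 1; omega⟩
    · exact Or.inr ⟨c, by rw [hj, hc]⟩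
  -- characteristic
  have hpchar : CharP F p := by
    haveI : CharP F (ringChar F) := ringChar.charP F
    have hp' : (ringChar F).Prime := CharP.char_is_prime F (ringChar F)
    haveI : Fact (ringChar F).Prime := ⟨hp'⟩
    obtain ⟨n, -, hcn⟩ := FiniteField.card F (ringChar F)
    have hdvd' : ringChar F ∣ p := by
      have h1 : ringChar F ∣ (p ^ l) ^ 2 := by
        rw [← hqpl, ← hcard, hcn]
        exact dvd_pow_self _ (by positivity)
      exact hp'.dvd_of_dvd_pow (hp'.dvd_of_dvd_pow h1)
    have : ringChar F = p := ((Nat.prime_dvd_prime_iff_eq hp' hp).mp hdvd')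
    rw [← this]
    exact ringChar.charP F
  haveI := hpchar
  -- the base field and its cardinality
  have hScard : {lam : F | lam ^ q = lam}.ncard = q := by
    rw [hqpl]
    exact ncard_fixed_of_card_sq p l hl (by rw [← hqpl]; exact hcard)
  obtain ⟨K, hKcoe⟩ : ∃ K : Subfield F, (K : Set F) = {lam : F | lam ^ q = lam} := by
    refine ⟨(iterateFrobenius F p l).eqLocusField (RingHom.id F), ?_⟩
    ext x
    show iterateFrobenius F p l x = x ↔ x ^ q = x
    rw [iterateFrobenius_def, hqpl]
  -- main case analysis
  intro α β
  by_cases hα : α = 0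
  · have hD : {lam : F | circ (α + β) lam = circ α lam + circ β lam} = Set.univ :=
      Set.eq_univ_of_forall fun lam => by
        simp [Set.mem_setOf_eq, hα, hcirc0, zero_add]
    exact ⟨Or.inl hD, ⊤, by rw [hD, Subfield.coe_top]⟩
  by_cases hβ : β = 0
  · have hD : {lam : F | circ (α + β) lam = circ α lam + circ β lam} = Set.univ :=
      Set.eq_univ_of_forall fun lam => by
        simp [Set.mem_setOf_eq, hβ, hcirc0, add_zero]
    exact ⟨Or.inl hD, ⊤, by rw [hD, Subfield.coe_top]⟩
  rcases hclass α hα with hα2 | hα2 <;> rcases hclass β hβ with hβ2 | hβ2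
  · -- both even
    by_cases hs : α + β = 0
    · have hD : {lam : F | circ (α + β) lam = circ α lam + circ β lam} = Set.univ :=
        Set.eq_univ_of_forall fun lam => by
          simp only [Set.mem_setOf_eq, hevenc α hα2, hevenc β hβ2, hs, hcirc0, ← add_mul,
            zero_mul]
      exact ⟨Or.inl hD, ⊤, by rw [hD, Subfield.coe_top]⟩
    rcases hclass (α + β) hs with hs2' | hs2'
    · have hD : {lam : F | circ (α + β) lam = circ α lam + circ β lam} = Set.univ :=
        Set.eq_univ_of_forall fun lam => by
          simp only [Set.mem_setOf_eq, hevenc α hα2, hevenc β hβ2, hevenc _ hs2', add_mul]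
      exact ⟨Or.inl hD, ⊤, by rw [hD, Subfield.coe_top]⟩
    · have hD : {lam : F | circ (α + β) lam = circ α lam + circ β lam} =
          {lam : F | lam ^ q = lam} := by
        ext lam
        simp only [Set.mem_setOf_eq, hevenc α hα2, hevenc β hβ2, hoddc _ hs2', ← add_mul]
        exact mul_right_inj' hs
      exact ⟨Or.inr ⟨hD, hScard⟩, K, by rw [hD]; exact hKcoe⟩
  · -- α even, β odd
    have hD : {lam : F | circ (α + β) lam = circ α lam + circ β lam} =
        {lam : F | lam ^ q = lam} := by
      ext lam
      simp only [Set.mem_setOf_eq, hevenc α hα2, hoddc β hβ2]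
      by_cases hs : α + β = 0
      · rw [hs, hcirc0]
        have hβα : β = -α := eq_neg_of_add_eq_zero_right hs
        rw [hβα]
        constructor
        · intro h
          have h2 : α * (lam - lam ^ q) = 0 := by linear_combination -h
          rcases mul_eq_zero.mp h2 with h3 | h3
          · exact absurd h3 hα
          · exact (sub_eq_zero.mp h3).symm
        · intro h; rw [h]; ring
      rcases hclass (α + β) hs with hs2' | hs2'
      · rw [hevenc _ hs2']
        constructor
        · intro h
          have h2 : β * lam ^ q = β * lam := by linear_combination -h
          exact mul_left_cancel₀ hβ h2
        · intro h; rw [h]; ring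
      · rw [hoddc _ hs2']
        constructor
        · intro h
          have h2 : α * lam ^ q = α * lam := by linear_combination h
          exact mul_left_cancel₀ hα h2
        · intro h; rw [h]; ring
    exact ⟨Or.inr ⟨hD, hScard⟩, K, by rw [hD]; exact hKcoe⟩
  · -- α odd, β even
    have hD : {lam : F | circ (α + β) lam = circ α lam + circ β lam} =
        {lam : F | lam ^ q = lam} := by
      ext lam
      simp only [Set.mem_setOf_eq, hoddc α hα2, hevenc β hβ2]
      by_cases hs : α + β = 0
      · rw [hs, hcirc0]
        have hβα : β = -α := eq_neg_of_add_eq_zero_right hs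
        rw [hβα]
        constructor
        · intro h
          have h2 : α * (lam ^ q - lam) = 0 := by linear_combination -h
          rcases mul_eq_zero.mp h2 with h3 | h3
          · exact absurd h3 hα
          · exact sub_eq_zero.mp h3
        · intro h; rw [h]; ring
      rcases hclass (α + β) hs with hs2' | hs2'
      · rw [hevenc _ hs2']
        constructor
        · intro h
          have h2 : α * lam ^ q = α * lam := by linear_combination -h
          exact mul_left_cancel₀ hα h2
        · intro h; rw [h]; ring
      · rw [hoddc _ hs2']
        constructor
        · intro h
          have h2 : β * lam ^ q = β * lam := by linear_combination h
          exact mul_left_cancel₀ hβ h2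
        · intro h; rw [h]; ring
    exact ⟨Or.inr ⟨hD, hScard⟩, K, by rw [hD]; exact hKcoe⟩
  · -- both odd
    by_cases hs : α + β = 0
    · have hD : {lam : F | circ (α + β) lam = circ α lam + circ β lam} = Set.univ :=
        Set.eq_univ_of_forall fun lam => by
          simp only [Set.mem_setOf_eq, hoddc α hα2, hoddc β hβ2, hs, hcirc0, ← add_mul,
            zero_mul]
      exact ⟨Or.inl hD, ⊤, by rw [hD, Subfield.coe_top]⟩
    rcases hclass (α + β) hs with hs2' | hs2'
    · have hD : {lam : F | circ (α + β) lam = circ α lam + circ β lam} =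
          {lam : F | lam ^ q = lam} := by
        ext lam
        simp only [Set.mem_setOf_eq, hoddc α hα2, hoddc β hβ2, hevenc _ hs2', ← add_mul]
        rw [mul_right_inj' hs, eq_comm]
      exact ⟨Or.inr ⟨hD, hScard⟩, K, by rw [hD]; exact hKcoe⟩
    · have hD : {lam : F | circ (α + β) lam = circ α lam + circ β lam} = Set.univ :=
        Set.eq_univ_of_forall fun lam => by
          simp only [Set.mem_setOf_eq, hoddc α hα2, hoddc β hβ2, hoddc _ hs2', add_mul]
      exact ⟨Or.inl hD, ⊤, by rw [hD, Subfield.coe_top]⟩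
end

section
/- Let (q,n) be a Dickson pair with q = p^l and n > 2, and consider the Dickson nearfield setup. Suppose 1 ≤ s, t ≤ n with s ≠ t, that α, β ∈ g^{[s]_q}H, and that α+β ∈ g^{[t]_q}H. Then D(α,β) = {λ ∈ F : λ^{q^d} = λ} where d = gcd(t+n−s, n); in particular |D(α,β)| = q^d = p^{l·d}. -/
/-! Cancelling `α + β ≠ 0`, `λ ∈ D(α,β)` iff `φ^t λ = φ^s λ` for the Frobenius `φ = (·)^q`.
Since `φ^n = id` on `F`, this says that `λ` has period `t + n - s` under `φ`, hence period
`d = gcd(t + n - s, n)`. The fixed points of `φ^d` are the roots of `X^(q^d) - X`, which divides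
`X^(q^n) - X = ∏_{a ∈ F} (X - a)`, so there are exactly `q^d` of them. -/

open Function Polynomial

theorem iterate_eq_iterate_iff_isPeriodicPt {α : Type*} {f : α → α} {x : α} {n s t : ℕ}
    (hx : IsPeriodicPt f n x) (hs : s ≤ n) :
    f^[t] x = f^[s] x ↔ IsPeriodicPt f (t + n - s) x := by
  constructor
  · intro h
    calc f^[t + n - s] x = f^[n - s] (f^[t] x) := by
          rw [← iterate_add_apply, Nat.add_sub_assoc hs, Nat.add_comm]
      _ = f^[n] x := by rw [h, ← iterate_add_apply, Nat.sub_add_cancel hs]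
      _ = x := hx.eq
  · intro h
    calc f^[t] x = f^[t] (f^[n] x) := by rw [hx.eq]
      _ = f^[s] (f^[t + n - s] x) := by
          rw [← iterate_add_apply, ← iterate_add_apply, Nat.add_sub_cancel' (by omega)]
      _ = f^[s] x := by rw [h.eq]

theorem isPeriodicPt_iff_isPeriodicPt_gcd {α : Type*} {f : α → α} {x : α} {m n : ℕ}
    (hx : IsPeriodicPt f n x) : IsPeriodicPt f m x ↔ IsPeriodicPt f (m.gcd n) x :=
  ⟨fun h => h.gcd hx, fun h => h.trans_dvd (Nat.gcd_dvd_left m n)⟩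

theorem sub_dvd_pow_pow_mul_sub {R : Type*} [CommRing R] (x : R) (q d k : ℕ) :
    x ^ q ^ d - x ∣ x ^ q ^ (d * k) - x := by
  induction k with
  | zero => simp
  | succ k ih =>
    have h : x ^ q ^ (d * (k + 1)) - x =
        ((x ^ q ^ (d * k)) ^ q ^ d - x ^ q ^ d) + (x ^ q ^ d - x) := by
      rw [← pow_mul, ← pow_add, Nat.mul_succ]; ring
    rw [h]
    exact dvd_add (ih.trans (sub_dvd_pow_sub_pow _ _ _)) dvd_rfl

theorem ncard_pow_pow_eq_self_of_dvd {F : Type*} [Field F] [Fintype F] {q n d : ℕ}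
    (hcard : Fintype.card F = q ^ n) (hdn : d ∣ n) :
    {x : F | x ^ q ^ d = x}.ncard = q ^ d := by
  classical
  obtain ⟨k, rfl⟩ := hdn
  have hqd : 1 < q ^ d := by
    by_contra! h
    have := Fintype.one_lt_card (α := F)
    rw [hcard, pow_mul] at this
    exact this.not_ge (pow_le_one' h k)
  set f : F[X] := X ^ q ^ d - X
  set g : F[X] := X ^ Fintype.card F - X
  have hfg : f ∣ g := by simpa only [f, g, hcard] using sub_dvd_pow_pow_mul_sub (X : F[X]) q d k
  have hg : g ≠ 0 := FiniteField.X_pow_card_sub_X_ne_zero F Fintype.one_lt_card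
  have hf : f ≠ 0 := ne_zero_of_dvd_ne_zero hg hfg
  have hg_splits : g.Splits := by
    rw [splits_iff_card_roots, FiniteField.roots_X_pow_card_sub_X,
      FiniteField.X_pow_card_sub_X_natDegree_eq F Fintype.one_lt_card]
    rfl
  have hg_sep : g.Separable := (nodup_roots_iff_of_splits hg hg_splits).mp <| by
    rw [FiniteField.roots_X_pow_card_sub_X]; exact Finset.univ.nodup
  have hf_splits : f.Splits := hg_splits.of_dvd hg hfg
  have hset : {x : F | x ^ q ^ d = x} = ↑f.roots.toFinset := by
    ext x; simp [f, mem_roots hf, sub_eq_zero]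
  rw [hset, Set.ncard_coe_finset,
    Multiset.toFinset_card_of_nodup (nodup_roots (hg_sep.of_dvd hfg)),
    splits_iff_card_roots.mp hf_splits, FiniteField.X_pow_card_sub_X_natDegree_eq F hqd]

theorem ne_zero_of_forall_ne_zero_eq_pow {F : Type*} [Field F] [Fintype F]
    (hF : 2 < Fintype.card F) {g : F} (hg : ∀ x : F, x ≠ 0 → ∃ j : ℕ, x = g ^ j) : g ≠ 0 := by
  classical
  rintro rfl
  obtain ⟨x, -, hx⟩ := Finset.exists_mem_notMem_of_card_lt_card
    (s := ({0, 1} : Finset F)) (t := Finset.univ) ((Finset.card_le_two).trans_lt hF)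
  simp only [Finset.mem_insert, Finset.mem_singleton, not_or] at hx
  obtain ⟨j, rfl⟩ := hg x hx.1
  rcases j with _ | j
  · exact hx.2 (pow_zero _)
  · exact hx.1 (zero_pow j.succ_ne_zero)

theorem inCoset.ne_zero {F : Type*} [Field F] {g x : F} {q n k : ℕ} (hg : g ≠ 0)
    (hx : inCoset g q n k x) : x ≠ 0 := by
  obtain ⟨j, rfl⟩ := hx
  exact mul_ne_zero (pow_ne_zero _ hg) (pow_ne_zero _ (pow_ne_zero _ hg))

theorem distributiveSet_eq_of_two_in_same_coset_general {F : Type*} [Field F] [Fintype F]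
    (q n p l : ℕ) (hp : Nat.Prime p) (hl : 0 < l) (hq : q = p ^ l)
    (hn : 2 < n)
    (hcard : Fintype.card F = q ^ n)
    (g : F) (hg : ∀ x : F, x ≠ 0 → ∃ j : ℕ, x = g ^ j)
    (circ : F → F → F)
    (hcirc : ∀ k : ℕ, 1 ≤ k → k ≤ n → ∀ x : F, inCoset g q n k x →
      ∀ lam : F, circ x lam = x * lam ^ q ^ k)
    (α β : F) (s t : ℕ) (hs1 : 1 ≤ s) (hsn : s ≤ n) (ht1 : 1 ≤ t) (htn : t ≤ n)
    (hcα : inCoset g q n s α) (hcβ : inCoset g q n s β)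
    (hcαβ : inCoset g q n t (α + β)) :
    {lam : F | circ (α + β) lam = circ α lam + circ β lam} =
      {lam : F | lam ^ q ^ Nat.gcd (t + n - s) n = lam} ∧
    {lam : F | circ (α + β) lam = circ α lam + circ β lam}.ncard =
      q ^ Nat.gcd (t + n - s) n ∧
    q ^ Nat.gcd (t + n - s) n = p ^ (l * Nat.gcd (t + n - s) n) := by
  have hq1 : 1 < q := hq ▸ Nat.one_lt_pow hl.ne' hp.one_lt
  have hg0 : g ≠ 0 := ne_zero_of_forall_ne_zero_eq_pow (hcard ▸ hn.trans (Nat.lt_pow_self hq1)) hg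
  have hperiodic (x : F) : IsPeriodicPt (· ^ q) n x := by
    rw [IsPeriodicPt, IsFixedPt, pow_iterate, ← hcard]
    exact FiniteField.pow_card x
  have hD : {lam : F | circ (α + β) lam = circ α lam + circ β lam} =
      {lam : F | lam ^ q ^ Nat.gcd (t + n - s) n = lam} := by
    ext lam
    rw [Set.mem_ofPred_eq, Set.mem_ofPred_eq, hcirc t ht1 htn _ hcαβ, hcirc s hs1 hsn α hcα,
      hcirc s hs1 hsn β hcβ, ← add_mul, mul_right_inj' (hcαβ.ne_zero hg0)]
    have key := (iterate_eq_iterate_iff_isPeriodicPt (hperiodic lam) hsn (t := t)).trans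
      (isPeriodicPt_iff_isPeriodicPt_gcd (hperiodic lam))
    simpa only [pow_iterate, IsPeriodicPt, IsFixedPt] using key
  exact ⟨hD, hD ▸ ncard_pow_pow_eq_self_of_dvd hcard (Nat.gcd_dvd_right _ _),
    by rw [hq, ← pow_mul]⟩

/-- Dickson nearfield setup with `n > 2`: if `α, β ∈ g^([s]_q) H` and
`α + β ∈ g^([t]_q) H` with `s ≠ t`, then `D(α,β) = {λ : λ^(q^d) = λ}` where
`d = gcd(t + n - s, n)`; in particular `|D(α,β)| = q^d = p^(l·d)`. -/
theorem distributiveSet_eq_of_two_in_same_coset {F : Type*} [Field F] [Fintype F]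
    (q n p l : ℕ) (hp : Nat.Prime p) (hl : 0 < l) (hq : q = p ^ l)
    (hqn : IsDicksonPair q n) (hn : 2 < n)
    (hcard : Fintype.card F = q ^ n)
    (g : F) (hg : ∀ x : F, x ≠ 0 → ∃ j : ℕ, x = g ^ j)
    (circ : F → F → F)
    (hcirc0 : ∀ lam : F, circ 0 lam = 0)
    (hcirc : ∀ k : ℕ, 1 ≤ k → k ≤ n → ∀ x : F, inCoset g q n k x →
      ∀ lam : F, circ x lam = x * lam ^ q ^ k)
    (α β : F) (s t : ℕ) (hs1 : 1 ≤ s) (hsn : s ≤ n) (ht1 : 1 ≤ t) (htn : t ≤ n)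
    (hst : s ≠ t)
    (hcα : inCoset g q n s α) (hcβ : inCoset g q n s β)
    (hcαβ : inCoset g q n t (α + β)) :
    {lam : F | circ (α + β) lam = circ α lam + circ β lam} =
      {lam : F | lam ^ q ^ Nat.gcd (t + n - s) n = lam} ∧
    {lam : F | circ (α + β) lam = circ α lam + circ β lam}.ncard =
      q ^ Nat.gcd (t + n - s) n ∧
    q ^ Nat.gcd (t + n - s) n = p ^ (l * Nat.gcd (t + n - s) n) :=
  distributiveSet_eq_of_two_in_same_coset_general q n p l hp hl hq hn hcard g hg circ hcirc α β s t
    hs1 hsn ht1 htn hcα hcβ hcαβ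
end

section
/- Let (q,n) be a Dickson pair with n > 2 and consider the Dickson nearfield setup. Let r, s, t be integers with 0 < t < s < r ≤ n such that r−s divides n and r−t divides n, and let α ∈ g^{[r]_q}H, β ∈ g^{[s]_q}H with α+β ∈ g^{[t]_q}H. Then the set F_{r,s,t}(α,β) = {λ ∈ F : α(λ^{q^t} − λ^{q^r}) = β(λ^{q^s} − λ^{q^t})} ∩ {λ ∈ F : λ^{q^{r−s}} = λ} ∩ {λ ∈ F : λ^{q^{r−t}} = λ} is the underlying set of a subfield of F: it contains 0 and 1 and is closed under addition, negation, multiplication, and inverses of nonzero elements. (Here the first of the three sets equals D(α,β).) -/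
/-- Dickson nearfield setup with `n > 2`: for `0 < t < s < r ≤ n` with `r - s ∣ n`
and `r - t ∣ n`, and `α ∈ g^([r]_q) H`, `β ∈ g^([s]_q) H`, `α+β ∈ g^([t]_q) H`, the
set `F_{r,s,t}(α,β) = D(α,β) ∩ F_{q^(r-s)} ∩ F_{q^(r-t)}` is the underlying set of a
subfield of `F`; here `D(α,β)` is the solution set of
`α(λ^(q^t) - λ^(q^r)) = β(λ^(q^s) - λ^(q^t))`. -/
theorem F_rst_isSubfield {F : Type*} [Field F] [Fintype F]
    (q n : ℕ) (hqn : IsDicksonPair q n) (hn : 2 < n)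
    (hcard : Fintype.card F = q ^ n)
    (g : F) (hg : ∀ x : F, x ≠ 0 → ∃ j : ℕ, x = g ^ j)
    (circ : F → F → F)
    (hcirc0 : ∀ lam : F, circ 0 lam = 0)
    (hcirc : ∀ k : ℕ, 1 ≤ k → k ≤ n → ∀ x : F, inCoset g q n k x →
      ∀ lam : F, circ x lam = x * lam ^ q ^ k)
    (α β : F) (r s t : ℕ) (ht0 : 0 < t) (hts : t < s) (hsr : s < r) (hrn : r ≤ n)
    (hrsn : (r - s) ∣ n) (hrtn : (r - t) ∣ n)
    (hcα : inCoset g q n r α) (hcβ : inCoset g q n s β)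
    (hcαβ : inCoset g q n t (α + β)) :
    {lam : F | α * (lam ^ q ^ t - lam ^ q ^ r) = β * (lam ^ q ^ s - lam ^ q ^ t)} =
      {lam : F | circ (α + β) lam = circ α lam + circ β lam} ∧
    ∃ K : Subfield F, (K : Set F) =
      {lam : F | α * (lam ^ q ^ t - lam ^ q ^ r) = β * (lam ^ q ^ s - lam ^ q ^ t)} ∩
        {lam : F | lam ^ q ^ (r - s) = lam} ∩ {lam : F | lam ^ q ^ (r - t) = lam} := by
  obtain ⟨hq0, hn0, ⟨p, l, hp, hl, hq⟩, -, -⟩ := hqn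
  -- characteristic
  haveI : Fact p.Prime := ⟨hp⟩
  obtain ⟨p', hp'⟩ := CharP.exists F
  haveI := hp'
  obtain ⟨m, hp'prime, hm⟩ := FiniteField.card F p'
  have hpp' : p = p' := by
    have h1 : (p : ℕ) ^ (l * n) = p' ^ (m : ℕ) := by
      rw [hcard, hq, ← pow_mul] at hm
      exact hm
    have : p ∣ p' ^ (m : ℕ) := by
      rw [← h1]
      exact dvd_pow_self p (Nat.mul_ne_zero hl.ne' hn0.ne')
    exact ((Nat.prime_dvd_prime_iff_eq hp hp'prime).mp (hp.dvd_of_dvd_pow this))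
  subst hpp'
  -- rewriting powers as iterated Frobenius
  have hqpow : ∀ (d : ℕ) (x : F), x ^ q ^ d = iterateFrobenius F p (l * d) x := by
    intro d x
    rw [iterateFrobenius_def, hq, ← pow_mul]
  constructor
  · ext lam
    rw [Set.mem_setOf_eq, Set.mem_setOf_eq,
      hcirc t ht0 (le_trans (le_of_lt (lt_trans hts hsr)) hrn) _ hcαβ,
      hcirc r (le_trans ht0 (le_of_lt (lt_trans hts hsr))) hrn _ hcα,
      hcirc s (le_trans ht0 (le_of_lt hts)) (le_trans (le_of_lt hsr) hrn) _ hcβ]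
    constructor <;> intro h <;> linear_combination h
  · refine ⟨RingHom.eqLocusField (iterateFrobenius F p (l * (r - s))) (RingHom.id F) ⊓
      RingHom.eqLocusField (iterateFrobenius F p (l * (r - t))) (RingHom.id F), ?_⟩
    ext x
    simp only [Subfield.mem_inf, SetLike.mem_coe, Set.mem_inter_iff, Set.mem_setOf_eq]
    have hmem : ∀ d : ℕ, x ∈ RingHom.eqLocusField (iterateFrobenius F p (l * d)) (RingHom.id F)
        ↔ x ^ q ^ d = x := by
      intro d
      rw [hqpow]
      exact Iff.rfl
    rw [hmem, hmem]
    constructor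
    · rintro ⟨h1, h2⟩
      have hs' : x ^ q ^ s = x ^ q ^ r := by
        have := congrArg (· ^ q ^ s) h1
        simpa [← pow_mul, ← pow_add, Nat.sub_add_cancel (le_of_lt hsr)] using this.symm
      have ht' : x ^ q ^ t = x ^ q ^ r := by
        have := congrArg (· ^ q ^ t) h2
        simpa [← pow_mul, ← pow_add, Nat.sub_add_cancel
          (le_of_lt (lt_trans hts hsr))] using this.symm
      refine ⟨⟨?_, h1⟩, h2⟩
      rw [hs', ht']
      ring
    · rintro ⟨⟨-, h1⟩, h2⟩
      exact ⟨h1, h2⟩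
end

section
/- Consider the Dickson nearfield setup. Let r, s, t ∈ {1,…,n} be pairwise distinct, and let α ∈ g^{[r]_q}H, β ∈ g^{[s]_q}H with α+β ∈ g^{[t]_q}H. Then D(α,β) = {λ ∈ F : α(λ^{q^t} − λ^{q^r}) = β(λ^{q^s} − λ^{q^t})}, and this set contains 0 and 1, is closed under addition, and is closed under multiplication by every k ∈ F satisfying k^{q^r} = k, k^{q^s} = k and k^{q^t} = k; hence D(α,β) is a vector space over the subfield {k ∈ F : k^{q^r} = k^{q^s} = k^{q^t} = k} of F. -/
/-- Dickson nearfield setup: for pairwise distinct `r, s, t ∈ {1,…,n}` with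
`α ∈ g^([r]_q) H`, `β ∈ g^([s]_q) H`, `α+β ∈ g^([t]_q) H`, the set `D(α,β)` equals
the solution set of `α(λ^(q^t) - λ^(q^r)) = β(λ^(q^s) - λ^(q^t))`, contains `0` and
`1`, is closed under addition, and is closed under multiplication by every `k` fixed
by the three Frobenius powers; hence it is a vector space over that subfield. -/
theorem distributiveSet_vectorSpace_structure {F : Type*} [Field F] [Fintype F]
    (q n : ℕ) (hqn : IsDicksonPair q n)
    (hcard : Fintype.card F = q ^ n)
    (g : F) (hg : ∀ x : F, x ≠ 0 → ∃ j : ℕ, x = g ^ j)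
    (circ : F → F → F)
    (hcirc0 : ∀ lam : F, circ 0 lam = 0)
    (hcirc : ∀ k : ℕ, 1 ≤ k → k ≤ n → ∀ x : F, inCoset g q n k x →
      ∀ lam : F, circ x lam = x * lam ^ q ^ k)
    (α β : F) (r s t : ℕ)
    (hr1 : 1 ≤ r) (hrn : r ≤ n) (hs1 : 1 ≤ s) (hsn : s ≤ n) (ht1 : 1 ≤ t) (htn : t ≤ n)
    (hrs : r ≠ s) (hrt : r ≠ t) (hst : s ≠ t)
    (hcα : inCoset g q n r α) (hcβ : inCoset g q n s β)
    (hcαβ : inCoset g q n t (α + β)) :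
    {lam : F | circ (α + β) lam = circ α lam + circ β lam} =
      {lam : F | α * (lam ^ q ^ t - lam ^ q ^ r) = β * (lam ^ q ^ s - lam ^ q ^ t)} ∧
    (0 : F) ∈ {lam : F | circ (α + β) lam = circ α lam + circ β lam} ∧
    (1 : F) ∈ {lam : F | circ (α + β) lam = circ α lam + circ β lam} ∧
    (∀ lam₁ ∈ {lam : F | circ (α + β) lam = circ α lam + circ β lam},
      ∀ lam₂ ∈ {lam : F | circ (α + β) lam = circ α lam + circ β lam},
        lam₁ + lam₂ ∈ {lam : F | circ (α + β) lam = circ α lam + circ β lam}) ∧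
    (∀ k : F, k ^ q ^ r = k → k ^ q ^ s = k → k ^ q ^ t = k →
      ∀ lam₀ ∈ {lam : F | circ (α + β) lam = circ α lam + circ β lam},
        k * lam₀ ∈ {lam : F | circ (α + β) lam = circ α lam + circ β lam}) := by
  obtain ⟨hq, hn, ⟨p, l, hp, hl, hql⟩, -, -⟩ := hqn
  have hα : ∀ lam, circ α lam = α * lam ^ q ^ r := hcirc r hr1 hrn α hcα
  have hβ : ∀ lam, circ β lam = β * lam ^ q ^ s := hcirc s hs1 hsn β hcβ
  have hαβ : ∀ lam, circ (α + β) lam = (α + β) * lam ^ q ^ t := hcirc t ht1 htn _ hcαβ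
  have key : ∀ lam : F, (circ (α + β) lam = circ α lam + circ β lam) ↔
      (α + β) * lam ^ q ^ t = α * lam ^ q ^ r + β * lam ^ q ^ s := by
    intro lam; rw [hα, hβ, hαβ]
  -- characteristic
  haveI hfp : Fact p.Prime := ⟨hp⟩
  haveI : CharP F (ringChar F) := ringChar.charP F
  obtain ⟨m, hp', hcard'⟩ := FiniteField.card F (ringChar F)
  have hpp : ringChar F = p := by
    have h1 : ringChar F ^ (m : ℕ) = p ^ (l * n) := by
      rw [← hcard', hcard, hql, ← pow_mul]
    have hdvd : ringChar F ∣ p ^ (l * n) := h1 ▸ dvd_pow_self _ m.pos.ne'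
    exact (Nat.prime_dvd_prime_iff_eq hp' hp).mp (hp'.dvd_of_dvd_pow hdvd)
  haveI hcp : CharP F p := hpp ▸ ringChar.charP F
  have frob : ∀ (k : ℕ) (a b : F), (a + b) ^ q ^ k = a ^ q ^ k + b ^ q ^ k := by
    intro k a b
    rw [hql, ← pow_mul]
    exact add_pow_char_pow a b p (l * k)
  refine ⟨?_, ?_, ?_, ?_, ?_⟩
  · ext lam
    simp only [Set.mem_setOf_eq, key]
    constructor <;> intro h <;> linear_combination h
  · simp only [Set.mem_setOf_eq, key, zero_pow (pow_ne_zero _ hq.ne'), mul_zero, add_zero]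
  · simp [Set.mem_setOf_eq, key]
  · intro a ha b hb
    simp only [Set.mem_setOf_eq, key] at *
    rw [frob, frob, frob]
    linear_combination ha + hb
  · intro k hkr hks hkt a ha
    simp only [Set.mem_setOf_eq, key] at *
    rw [mul_pow, mul_pow, mul_pow, hkr, hks, hkt]
    linear_combination k * ha
end

section
/- Let m be a positive integer and let a, c, x₀ be integers. Define the sequence x_{i+1} = a·x_i + c for i ≥ 0. Suppose (i) gcd(c, m) = 1, (ii) a ≡ 1 (mod p) for every prime p dividing m, and (iii) a ≡ 1 (mod 4) whenever 4 divides m. Then the sequence (x_i mod m) has full period m: x_m ≡ x₀ (mod m) and the residues x₀, x₁, …, x_{m−1} are pairwise incongruent modulo m. -/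
/-!
Writing `S k = 1 + a + ⋯ + a^(k-1)`, one has `x (i + k) - x i = S k * ((a - 1) * x i + c)`, and
the second factor is coprime to `m` because every prime of `m` divides `a - 1` but not `c`.
So `x (i + k) ≡ x i (mod m)` iff `m ∣ S k`, and the theorem reduces to `m ∣ S k ↔ m ∣ k`.
Prime power by prime power this is lifting the exponent: `v_p (S k) = v_p k` when `p ∣ a - 1`
(and `4 ∣ a - 1` if `p = 2`); the one case left, `p = 2` exactly dividing `m`, only needs
`S k ≡ k (mod 2)`.
-/

theorem sub_eq_geom_sum_mul_of_recurrence {R : Type*} [CommRing R] {a c : R} {x : ℕ → R}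
    (hx : ∀ i, x (i + 1) = a * x i + c) (i k : ℕ) :
    x (i + k) - x i = (∑ j ∈ Finset.range k, a ^ j) * ((a - 1) * x i + c) := by
  induction k with
  | zero => simp
  | succ k ih =>
    rw [← add_assoc, hx, geom_sum_succ]
    linear_combination a * ih

theorem Int.isCoprime_mul_add_of_prime_dvd {b c m : ℤ} (hc : IsCoprime c m)
    (hb : ∀ p : ℕ, p.Prime → (p : ℤ) ∣ m → (p : ℤ) ∣ b) (y : ℤ) :
    IsCoprime (b * y + c) m := by
  rw [Int.isCoprime_iff_gcd_eq_one] at hc ⊢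
  refine Nat.coprime_of_dvd fun p hp hpu hpm => hp.not_dvd_one ?_
  have hpc : (p : ℤ) ∣ c := by
    simpa using dvd_sub (Int.natCast_dvd.mpr hpu) ((hb p hp (Int.natCast_dvd.mpr hpm)).mul_right y)
  rw [← hc]
  exact Nat.dvd_gcd (Int.natCast_dvd.mp hpc) hpm

theorem Int.geom_sum_modEq_card {a d : ℤ} (h : a ≡ 1 [ZMOD d]) (n : ℕ) :
    ∑ k ∈ Finset.range n, a ^ k ≡ n [ZMOD d] := by
  simpa using Int.ModEq.sum (s := Finset.range n) fun k _ => h.pow k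

theorem Int.emultiplicity_pow_sub_one {p : ℕ} (hp : p.Prime) {a : ℤ} (hpa : a ≡ 1 [ZMOD p])
    (h2 : p = 2 → a ≡ 1 [ZMOD 4]) (n : ℕ) :
    emultiplicity (p : ℤ) (a ^ n - 1) = emultiplicity (p : ℤ) (a - 1) + emultiplicity p n := by
  have hpa' : (p : ℤ) ∣ a - 1 := hpa.symm.dvd
  have hna : ¬(p : ℤ) ∣ a := fun h =>
    (Nat.prime_iff_prime_int.mp hp).not_dvd_one (by simpa using dvd_sub h hpa')
  rcases hp.eq_two_or_odd' with rfl | hodd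
  · have h := Int.two_pow_sub_pow' n (h2 rfl).symm.dvd hna
    rw [one_pow, ← Nat.cast_ofNat, Int.natCast_emultiplicity 2 n] at h
    exact_mod_cast h
  · simpa using Int.emultiplicity_pow_sub_pow hp hodd (y := 1) (by simpa using hpa') hna n

theorem Int.emultiplicity_geom_sum {p : ℕ} (hp : p.Prime) {a : ℤ} (hpa : a ≡ 1 [ZMOD p])
    (h2 : p = 2 → a ≡ 1 [ZMOD 4]) (n : ℕ) :
    emultiplicity (p : ℤ) (∑ k ∈ Finset.range n, a ^ k) = emultiplicity p n := by
  rcases eq_or_ne a 1 with rfl | ha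
  · simpa using Int.natCast_emultiplicity p n
  have hfin : emultiplicity (p : ℤ) (a - 1) ≠ ⊤ :=
    finiteMultiplicity_iff_emultiplicity_ne_top.mp <|
      Int.finiteMultiplicity_iff.mpr ⟨by simpa using hp.ne_one, sub_ne_zero.mpr ha⟩
  have h := Int.emultiplicity_pow_sub_one hp hpa h2 n
  rw [← geom_sum_mul, emultiplicity_mul (Nat.prime_iff_prime_int.mp hp), add_comm] at h
  exact WithTop.add_left_cancel hfin h

theorem Int.pow_dvd_geom_sum_iff {p e : ℕ} (hp : p.Prime) {a : ℤ} (hpa : a ≡ 1 [ZMOD p])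
    (h4 : p = 2 → 2 ≤ e → a ≡ 1 [ZMOD 4]) (n : ℕ) :
    (p : ℤ) ^ e ∣ ∑ k ∈ Finset.range n, a ^ k ↔ p ^ e ∣ n := by
  rcases le_or_gt e 1 with he | he
  · interval_cases e
    · simp
    · rw [pow_one, pow_one, (Int.geom_sum_modEq_card hpa n).dvd_iff, Int.natCast_dvd_natCast]
  · rw [pow_dvd_iff_le_emultiplicity, Int.emultiplicity_geom_sum hp hpa (fun h2 => h4 h2 he),
      ← pow_dvd_iff_le_emultiplicity]

theorem Int.natCast_dvd_geom_sum_iff {m : ℕ} {a : ℤ}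
    (ha : ∀ p : ℕ, p.Prime → (p : ℤ) ∣ m → a ≡ 1 [ZMOD p])
    (ha4 : (4 : ℤ) ∣ m → a ≡ 1 [ZMOD 4]) (n : ℕ) :
    (m : ℤ) ∣ ∑ k ∈ Finset.range n, a ^ k ↔ m ∣ n := by
  rw [Int.natCast_dvd, Nat.dvd_iff_prime_pow_dvd_dvd, Nat.dvd_iff_prime_pow_dvd_dvd]
  refine forall₂_congr fun p e => imp_congr_right fun hp => imp_congr_right fun hpe => ?_
  rcases Nat.eq_zero_or_pos e with rfl | he
  · simp
  have hpm : p ∣ m := (dvd_pow_self p he.ne').trans hpe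
  rw [← Int.natCast_dvd, Nat.cast_pow]
  refine Int.pow_dvd_geom_sum_iff hp (ha p hp (Int.natCast_dvd_natCast.mpr hpm)) (fun h2 h2e => ha4 ?_) n
  subst h2
  exact_mod_cast (pow_dvd_pow 2 h2e).trans hpe

theorem hull_dobell_general (m : ℕ) (a c : ℤ) (x : ℕ → ℤ)
    (hxrec : ∀ i : ℕ, x (i + 1) = a * x i + c)
    (hc : Int.gcd c (m : ℤ) = 1)
    (ha : ∀ p : ℕ, Nat.Prime p → (p : ℤ) ∣ (m : ℤ) → a ≡ 1 [ZMOD (p : ℤ)])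
    (ha4 : (4 : ℤ) ∣ (m : ℤ) → a ≡ 1 [ZMOD (4 : ℤ)]) :
    x m ≡ x 0 [ZMOD (m : ℤ)] ∧
      ∀ i j : ℕ, i < m → j < m → x i ≡ x j [ZMOD (m : ℤ)] → i = j := by
  have hstep : ∀ i k : ℕ, (m : ℤ) ∣ x (i + k) - x i ↔ m ∣ k := by
    intro i k
    have hcop : IsCoprime (m : ℤ) ((a - 1) * x i + c) :=
      (Int.isCoprime_mul_add_of_prime_dvd (Int.isCoprime_iff_gcd_eq_one.mpr hc)
        (fun p hp hpm => (ha p hp hpm).symm.dvd) (x i)).symm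
    rw [sub_eq_geom_sum_mul_of_recurrence hxrec, ← Int.natCast_dvd_geom_sum_iff ha ha4]
    exact ⟨hcop.dvd_of_dvd_mul_right, fun h => h.mul_right _⟩
  refine ⟨(Int.modEq_iff_dvd.mpr (by simpa using (hstep 0 m).mpr dvd_rfl)).symm, ?_⟩
  intro i j hi hj hij
  wlog hle : i ≤ j generalizing i j
  · exact (this j i hj hi hij.symm (le_of_not_ge hle)).symm
  obtain ⟨k, rfl⟩ := Nat.exists_eq_add_of_le hle
  have hk : m ∣ k := (hstep i k).mp (Int.modEq_iff_dvd.mp hij)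
  have hk0 : k = 0 := Nat.eq_zero_of_dvd_of_lt hk (by omega)
  omega

/-- Hull–Dobell theorem: the linear congruential sequence `x_{i+1} = a·x_i + c`
modulo `m` has full period `m` provided `gcd(c, m) = 1`, `a ≡ 1 (mod p)` for every
prime `p ∣ m`, and `a ≡ 1 (mod 4)` whenever `4 ∣ m`: that is, `x_m ≡ x₀ (mod m)`
and `x₀, …, x_{m-1}` are pairwise incongruent modulo `m`. -/
theorem hull_dobell (m : ℕ) (hm : 0 < m) (a c x₀ : ℤ) (x : ℕ → ℤ)
    (hx0 : x 0 = x₀) (hxrec : ∀ i : ℕ, x (i + 1) = a * x i + c)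
    (hc : Int.gcd c (m : ℤ) = 1)
    (ha : ∀ p : ℕ, Nat.Prime p → (p : ℤ) ∣ (m : ℤ) → a ≡ 1 [ZMOD (p : ℤ)])
    (ha4 : (4 : ℤ) ∣ (m : ℤ) → a ≡ 1 [ZMOD (4 : ℤ)]) :
    x m ≡ x 0 [ZMOD (m : ℤ)] ∧
      ∀ i j : ℕ, i < m → j < m → x i ≡ x j [ZMOD (m : ℤ)] → i = j :=
  hull_dobell_general m a c x hxrec hc ha ha4
end
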